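/- arXiv:math/0607639 — 5 statements merged into one kernel-verified Lean document; each statement's English description precedes it below -/
import Mathlib

section
/- Let R be a polynomial ring over the integers (or more generally a torsion-free commutative ring), E and M free R-modules, and φ : D_r(E) → M an R-module homomorphism from the r-th divided power module of E. If φ(ε^(r)) = 0 for every ε ∈ E (where ε^(r) denotes the r-th divided power of ε), then φ is identically zero. -/
/- Lemma 1.3.  We model the free `R`-module `E` by its coordinates `ι → R` with respect to a
(finite) basis `ι`, and the divided power module `D_r E` by its coordinates with respect to the
standard basis `{ε^(k) : k : ι → ℕ, |k| = r}`; the divided power `ε^(r)` of the element of `E`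
with coordinates `ε : ι → R` then has coordinates `k ↦ ∏ i, ε i ^ k i`.  The ring `R` is
assumed to be ℤ-torsion-free (e.g. a polynomial ring over ℤ), and `M` is a free `R`-module. -/

open Finset

def Bsum (k j : ℕ) : ℤ :=
  ∑ s ∈ Finset.range (k + 1), (-1) ^ s * (k.choose s : ℤ) * (s : ℤ) ^ j

lemma Bsum_rec (k j : ℕ) :
    Bsum (k + 1) j = -∑ m ∈ Finset.range j, (j.choose m : ℤ) * Bsum k m := by
  have expand : ∀ i : ℕ, ((i : ℤ) + 1) ^ j
      = ∑ m ∈ range (j + 1), (j.choose m : ℤ) * (i : ℤ) ^ m := by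
    intro i
    rw [add_pow]
    exact Finset.sum_congr rfl fun m hm => by ring
  have h2 : (∑ i ∈ range (k+1), (-1:ℤ)^(i+1) * (k.choose (i+1) : ℤ) * ((i+1 : ℕ) : ℤ)^j)
      + (-1:ℤ)^(0:ℕ) * (k.choose 0 : ℤ) * ((0 : ℕ) : ℤ)^j = Bsum k j := by
    rw [← Finset.sum_range_succ' (fun s => (-1:ℤ)^s * (k.choose s : ℤ) * (s : ℤ)^j) (k+1)]
    rw [Finset.sum_range_succ, Bsum]
    simp
  have h3 : ∑ i ∈ range (k+1), (-1:ℤ)^i * (k.choose i : ℤ) * ((i:ℤ)+1)^j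
      = ∑ m ∈ range (j+1), (j.choose m : ℤ) * Bsum k m := by
    simp_rw [expand, Finset.mul_sum]
    rw [Finset.sum_comm]
    refine Finset.sum_congr rfl fun m _ => ?_
    rw [Bsum, Finset.mul_sum]
    exact Finset.sum_congr rfl fun i _ => by ring
  have h1 : Bsum (k+1) j
      = (∑ i ∈ range (k+1), -((-1:ℤ)^i * (k.choose i : ℤ) * ((i:ℤ)+1)^j))
        + ((∑ i ∈ range (k+1), (-1:ℤ)^(i+1) * (k.choose (i+1) : ℤ) * ((i+1 : ℕ) : ℤ)^j)
          + (-1:ℤ)^(0:ℕ) * (k.choose 0 : ℤ) * ((0 : ℕ) : ℤ)^j) := by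
    rw [Bsum, Finset.sum_range_succ' (fun s => (-1:ℤ)^s * ((k+1).choose s : ℤ) * (s : ℤ)^j) (k+1)]
    rw [← add_assoc, ← Finset.sum_add_distrib]
    congr 1
    · refine Finset.sum_congr rfl fun i _ => ?_
      rw [Nat.choose_succ_succ]
      push_cast
      ring
    · simp
  rw [h1, h2, Finset.sum_neg_distrib, h3, Finset.sum_range_succ, Nat.choose_self]
  push_cast
  ring

lemma Bsum_eq (k : ℕ) : ∀ j ≤ k, Bsum k j = if j = k then (-1)^k * (k.factorial : ℤ) else 0 := by
  induction k with
  | zero =>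
    intro j hj
    interval_cases j
    simp [Bsum]
  | succ k ih =>
    intro j hj
    rw [Bsum_rec]
    rcases eq_or_lt_of_le hj with rfl | hj'
    · rw [if_pos rfl, Finset.sum_range_succ]
      have h1 : ∑ m ∈ range k, ((k+1).choose m : ℤ) * Bsum k m = 0 :=
        Finset.sum_eq_zero fun m hm => by
          rw [ih m (le_of_lt (mem_range.mp hm)), if_neg (Nat.ne_of_lt (mem_range.mp hm))]; ring
      rw [h1, ih k le_rfl, if_pos rfl, Nat.choose_succ_self_right]
      push_cast [Nat.factorial_succ]
      ring
    · have hjk : j ≤ k := Nat.lt_succ_iff.mp hj'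
      rw [if_neg (Nat.ne_of_lt hj')]
      have h1 : ∑ m ∈ range j, (j.choose m : ℤ) * Bsum k m = 0 :=
        Finset.sum_eq_zero fun m hm => by
          have hm' : m < k := lt_of_lt_of_le (mem_range.mp hm) hjk
          rw [ih m (le_of_lt hm'), if_neg (Nat.ne_of_lt hm')]; ring
      rw [h1, neg_zero]

lemma prodBsum {ι : Type*} [Fintype ι] [DecidableEq ι] (k j : ι → ℕ) :
    ∑ s ∈ Fintype.piFinset (fun i => Finset.range (k i + 1)),
      (∏ i, (-1:ℤ)^(s i) * ((k i).choose (s i) : ℤ)) * ∏ i, (s i : ℤ)^(j i)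
    = ∏ i, Bsum (k i) (j i) := by
  rw [show (∏ i, Bsum (k i) (j i))
      = ∏ i, ∑ t ∈ Finset.range (k i + 1), (-1:ℤ)^t * ((k i).choose t : ℤ) * (t : ℤ)^(j i)
      from rfl, Finset.prod_univ_sum]
  refine Finset.sum_congr rfl fun s _ => ?_
  rw [← Finset.prod_mul_distrib]

lemma torsionfree_free {R : Type*} [CommRing R] [NoZeroSMulDivisors ℤ R]
    {M : Type*} [AddCommGroup M] [Module R M] [Module.Free R M]
    (n : ℤ) (x : M) (hn : n ≠ 0) (hx : n • x = 0) : x = 0 := by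
  rw [← Int.cast_smul_eq_zsmul R] at hx
  let b := Module.Free.chooseBasis R M
  have h2 : (n : R) • b.repr x = 0 := by rw [← map_smul, hx, map_zero]
  have h3 : b.repr x = 0 := by
    ext i
    have h4 := DFunLike.congr_fun h2 i
    rw [Finsupp.smul_apply, smul_eq_mul] at h4
    have h5 : n • ((b.repr x) i) = 0 := by
      rw [← Int.cast_smul_eq_zsmul R, smul_eq_mul]
      exact h4
    simpa using (smul_eq_zero.mp h5).resolve_left hn
  simpa using (LinearEquiv.map_eq_zero_iff b.repr).mp h3

theorem stmt_0 {R : Type*} [CommRing R] [NoZeroSMulDivisors ℤ R]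
    {ι : Type*} [Fintype ι] {M : Type*} [AddCommGroup M] [Module R M] [Module.Free R M]
    (r : ℕ)
    (φ : ({k : ι → ℕ // ∑ i, k i = r} → R) →ₗ[R] M)
    (h : ∀ ε : ι → R, φ (fun k => ∏ i, ε i ^ (k : ι → ℕ) i) = 0) :
    φ = 0 := by
  classical
  haveI : Fintype {k : ι → ℕ // ∑ i, k i = r} :=
    Fintype.ofInjective
      (fun k (i : ι) => (⟨(k : ι → ℕ) i, Nat.lt_succ_of_le (by
        calc (k : ι → ℕ) i ≤ ∑ i, (k : ι → ℕ) i :=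
              Finset.single_le_sum (fun _ _ => Nat.zero_le _) (Finset.mem_univ i)
          _ = r := k.2)⟩ : Fin (r + 1)))
      (fun a b hab => Subtype.ext (funext fun i => congrArg Fin.val (congrFun hab i)))
  refine Module.Basis.ext (Pi.basisFun R _) fun k => ?_
  have hb : (Pi.basisFun R {k : ι → ℕ // ∑ i, k i = r}) k
      = (Pi.single k 1 : {k : ι → ℕ // ∑ i, k i = r} → R) := by
    simp [Pi.basisFun_apply]
  rw [hb, LinearMap.zero_apply]
  set z : ℤ := (-1) ^ r * ∏ i, ((k : ι → ℕ) i).factorial with hz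
  have hkey : (z • (Pi.single k 1 : {k : ι → ℕ // ∑ i, k i = r} → R))
      = ∑ s ∈ Fintype.piFinset (fun i => Finset.range ((k : ι → ℕ) i + 1)),
          (∏ i, (-1:ℤ)^(s i) * (((k : ι → ℕ) i).choose (s i) : ℤ))
            • (fun j : {k : ι → ℕ // ∑ i, k i = r} => ∏ i, ((s i : R)) ^ (j : ι → ℕ) i) := by
    funext j
    rw [Finset.sum_apply]
    simp only [Pi.smul_apply]
    have hR : (∑ s ∈ Fintype.piFinset (fun i => Finset.range ((k : ι → ℕ) i + 1)),
        (∏ i, (-1:ℤ)^(s i) * (((k : ι → ℕ) i).choose (s i) : ℤ))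
          • ((fun j : {k : ι → ℕ // ∑ i, k i = r} => ∏ i, ((s i : R)) ^ (j : ι → ℕ) i) j))
        = (((∏ i, Bsum ((k : ι → ℕ) i) ((j : ι → ℕ) i)) : ℤ) : R) := by
      rw [← prodBsum]
      push_cast
      refine Finset.sum_congr rfl fun s _ => ?_
      rw [zsmul_eq_mul]
      push_cast
      ring
    rw [hR]
    by_cases hjk : j = k
    · subst hjk
      rw [Pi.single_eq_same]
      have hprod : (∏ i, Bsum ((j : ι → ℕ) i) ((j : ι → ℕ) i)) = z := by
        rw [hz]
        have : ∀ i, Bsum ((j : ι → ℕ) i) ((j : ι → ℕ) i)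
            = (-1)^((j : ι → ℕ) i) * (((j : ι → ℕ) i).factorial : ℤ) := fun i => by
          rw [Bsum_eq _ _ le_rfl, if_pos rfl]
        rw [Finset.prod_congr rfl fun i _ => this i, Finset.prod_mul_distrib,
          Finset.prod_pow_eq_pow_sum, j.2]
        push_cast
        ring
      rw [hprod, zsmul_eq_mul, mul_one]
    · have hex : ∃ i, (j : ι → ℕ) i < (k : ι → ℕ) i := by
        by_contra hc
        push_neg at hc
        exact hjk (Subtype.ext (funext fun i =>
          ((Finset.sum_eq_sum_iff_of_le (fun i _ => hc i)).mp
            (by rw [j.2, k.2]) i (Finset.mem_univ i)).symm))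
      obtain ⟨i0, hi0⟩ := hex
      rw [Pi.single_eq_of_ne hjk, smul_zero]
      rw [Finset.prod_eq_zero (Finset.mem_univ i0)
        (by rw [Bsum_eq _ _ (le_of_lt hi0), if_neg (Nat.ne_of_lt hi0)])]
      simp
  have h0 := congrArg φ hkey
  rw [map_zsmul, map_sum] at h0
  rw [Finset.sum_eq_zero (fun s _ => by
    rw [map_zsmul, h (fun i => ((s i : ℕ) : R)), smul_zero])] at h0
  have hzne : z ≠ 0 := by
    rw [hz]
    apply mul_ne_zero
    · exact pow_ne_zero _ (by norm_num)
    · positivity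
  exact torsionfree_free (R := R) z _ hzne h0
end

section
/- There exists a counterexample to the divided-power vanishing lemma in characteristic 2: over R = Z/2Z, with E free of rank 2 with basis x, y, the R-linear map φ : D_3(E) → R defined on the basis x^(3), x^(2)y, xy^(2), y^(3) of D_3(E) by φ(x^(3)) = φ(y^(3)) = 0 and φ(x^(2)y) = φ(xy^(2)) = 1 satisfies φ(ε^(3)) = 0 for every ε ∈ E, yet φ is not identically zero. -/
/- On `ε = a x + b y` the functional picks out the two mixed coefficients of `ε^(3)`, whose sum
is `a²b + ab² = ab(a + b)`; over `ℤ/2` one of `a`, `b`, `a + b` vanishes. -/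

theorem ZMod.sq_mul_add_mul_sq_eq_zero (a b : ZMod 2) : a ^ 2 * b + a * b ^ 2 = 0 := by
  revert a b
  decide

namespace DividedPowerCounterexample

abbrev Exponent := {k : Fin 2 → ℕ // ∑ i, k i = 3}

def x2y : Exponent := ⟨![2, 1], by decide⟩

def xy2 : Exponent := ⟨![1, 2], by decide⟩

def mixedCoeffSum : (Exponent → ZMod 2) →ₗ[ZMod 2] ZMod 2 :=
  LinearMap.proj (R := ZMod 2) (φ := fun _ => ZMod 2) x2y + LinearMap.proj xy2

theorem mixedCoeffSum_apply (v : Exponent → ZMod 2) : mixedCoeffSum v = v x2y + v xy2 := rfl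

theorem mixedCoeffSum_single (k : Exponent) :
    mixedCoeffSum (Pi.single k 1) = (if k = x2y then 1 else 0) + (if k = xy2 then 1 else 0) := by
  simp only [mixedCoeffSum_apply, Pi.single_apply, eq_comm]

theorem mixedCoeffSum_cube (ε : Fin 2 → ZMod 2) :
    mixedCoeffSum (fun k : Exponent => ∏ i, ε i ^ (k : Fin 2 → ℕ) i) = 0 := by
  simpa [mixedCoeffSum_apply, x2y, xy2, Fin.prod_univ_two] using
    ZMod.sq_mul_add_mul_sq_eq_zero (ε 0) (ε 1)

theorem mixedCoeffSum_ne_zero : mixedCoeffSum ≠ 0 := by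
  intro h
  simpa [mixedCoeffSum_single, x2y, xy2] using LinearMap.congr_fun h (Pi.single x2y 1)

end DividedPowerCounterexample

open DividedPowerCounterexample in
theorem stmt_1 :
    ∃ φ : ({k : Fin 2 → ℕ // ∑ i, k i = 3} → ZMod 2) →ₗ[ZMod 2] ZMod 2,
      φ (Pi.single ⟨![3, 0], by decide⟩ 1) = 0 ∧
      φ (Pi.single ⟨![0, 3], by decide⟩ 1) = 0 ∧
      φ (Pi.single ⟨![2, 1], by decide⟩ 1) = 1 ∧
      φ (Pi.single ⟨![1, 2], by decide⟩ 1) = 1 ∧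
      (∀ ε : Fin 2 → ZMod 2,
        φ (fun k => ∏ i, ε i ^ (k : Fin 2 → ℕ) i) = 0) ∧
      φ ≠ 0 := by
  refine ⟨mixedCoeffSum, ?_, ?_, ?_, ?_, mixedCoeffSum_cube, mixedCoeffSum_ne_zero⟩ <;>
    simp [mixedCoeffSum_single, x2y, xy2]
end

section
/- A bounded-below complex L of projective modules over a commutative ring R is splittable (i.e., L is the direct sum of a split exact subcomplex and a subcomplex with zero differential) if and only if the homology module H_j(L) is projective for all j. -/
/-!
Write `Z n` for the cycles and `Bd n = range (d n)` for the boundaries in degree `n`.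
If the homology is projective, then by induction every `Bd n` is projective: `Bd 0` is a summand
of `L 0`; `Z (n + 1) = ker (d n)` is a summand of `L (n + 1)` because the quotient is `Bd n`; and
`Bd (n + 1)` is a summand of `Z (n + 1)` because the quotient is the homology. So `d n` has a
section over `Bd n`, with image `C (n + 1)` complementary to `Z (n + 1)`, and `Bd n` has a
complement `H n` in `Z n`. Then `L n = (Bd n ⊕ C n) ⊕ H n`, the first summand is split exact
with contracting homotopy the inverse of `d : C (n + 1) ≃ Bd n`, and `d` vanishes on `H n`.

Conversely, in a splitting `L = A ⊕ B` every boundary lies in `A`, and the homotopy shows that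
the cycles in `A` are boundaries, so the homology is isomorphic to `B`, a summand of `L`.
-/

open LinearMap Submodule

namespace LinearMap

variable {R M N : Type*} [Ring R] [AddCommGroup M] [Module R M] [AddCommGroup N] [Module R N]

theorem isCompl_range_ker_of_comp_eq_id {f : M →ₗ[R] N} {g : N →ₗ[R] M} (h : f ∘ₗ g = id) :
    IsCompl (range g) (ker f) := by
  have hgf : IsIdempotentElem (g ∘ₗ f) := by
    rw [IsIdempotentElem, Module.End.mul_eq_comp, comp_assoc, ← comp_assoc f, h, id_comp]
  have hf : range f = ⊤ := range_eq_top.2 fun y => ⟨g y, congr($h y)⟩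
  have hg : ker g = ⊥ := ker_eq_bot_of_inverse h
  simpa [range_comp_of_range_eq_top g hf, ker_comp_of_ker_eq_bot f hg] using hgf.isCompl

theorem range_le_of_isCompl {f : M →ₗ[R] N} {a b : Submodule R M} {c : Submodule R N}
    (hab : IsCompl a b) (ha : a ≤ c.comap f) (hb : b ≤ ker f) : range f ≤ c := by
  rw [range_eq_map, ← hab.sup_eq_top, Submodule.map_sup]
  exact sup_le (map_le_iff_le_comap.2 ha) (map_le_iff_le_comap.2 (hb.trans (comap_mono bot_le)))

end LinearMap

namespace Submodule

variable {R M : Type*} [Ring R] [AddCommGroup M] [Module R M]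

theorem projective_of_isCompl [Module.Projective R M] {p q : Submodule R M} (h : IsCompl p q) :
    Module.Projective R p :=
  .of_split p.subtype (p.projectionOnto q h) (by ext; simp)

theorem projective_quotient_of_isCompl {p q : Submodule R M} (h : IsCompl p q)
    [Module.Projective R q] : Module.Projective R (M ⧸ p) :=
  .of_equiv (p.quotientEquivOfIsCompl q h).symm

theorem exists_isCompl_of_projective_quotient (p : Submodule R M)
    [Module.Projective R (M ⧸ p)] : ∃ q : Submodule R M, IsCompl p q := by
  obtain ⟨σ, hσ⟩ := p.mkQ.exists_rightInverse_of_surjective p.range_mkQ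
  exact ⟨range σ, by simpa using (isCompl_range_ker_of_comp_eq_id hσ).symm⟩

theorem projective_of_projective_quotient [Module.Projective R M] (p : Submodule R M)
    [Module.Projective R (M ⧸ p)] : Module.Projective R p :=
  have ⟨_, h⟩ := p.exists_isCompl_of_projective_quotient
  projective_of_isCompl h

theorem exists_disjoint_sup_eq_of_projective_quotient {p z : Submodule R M} (hpz : p ≤ z)
    [Module.Projective R (z ⧸ p.comap z.subtype)] :
    ∃ h : Submodule R M, Disjoint p h ∧ p ⊔ h = z := by
  obtain ⟨q, hq⟩ := (p.comap z.subtype).exists_isCompl_of_projective_quotient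
  have hp : (p.comap z.subtype).map z.subtype = p := by
    rw [map_comap_subtype, inf_eq_right.2 hpz]
  refine ⟨q.map z.subtype, ?_, ?_⟩
  · rw [← hp]
    exact disjoint_map z.injective_subtype hq.disjoint
  · rw [← hp, ← map_sup, hq.sup_eq_top, map_top, range_subtype]

theorem projective_quotient_comap_of_isCompl [Module.Projective R M] {a b z p : Submodule R M}
    (hab : IsCompl a b) (hbz : b ≤ z) (hpa : p ≤ a) (hap : z ⊓ a ≤ p) :
    Module.Projective R (z ⧸ p.comap z.subtype) := by
  have hp : p.comap z.subtype = a.comap z.subtype :=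
    le_antisymm (comap_mono hpa) fun x hx => hap ⟨x.2, hx⟩
  have := projective_of_isCompl hab.symm
  have : Module.Projective R (b.comap z.subtype) := .of_equiv (comapSubtypeEquivOfLe hbz).symm
  rw [hp]
  exact projective_quotient_of_isCompl (isCompl_comap_subtype_of_isCompl_of_le hab.symm hbz).symm

end Submodule

namespace LinearMap

variable {R M N : Type*} [Ring R] [AddCommGroup M] [Module R M] [AddCommGroup N] [Module R N]

theorem projective_ker [Module.Projective R M] (f : M →ₗ[R] N) [Module.Projective R (range f)] :
    Module.Projective R (ker f) :=
  have : Module.Projective R (M ⧸ ker f) := .of_equiv f.quotKerEquivRange.symm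
  projective_of_projective_quotient _

end LinearMap

section ChainComplex

variable {R : Type*} [Ring R] {L : ℕ → Type*} [∀ i, AddCommGroup (L i)] [∀ i, Module R (L i)]
  (d : ∀ i : ℕ, L (i + 1) →ₗ[R] L i)

def cycles : ∀ n, Submodule R (L n)
  | 0 => ⊤
  | n + 1 => ker (d n)

structure BoundarySplitting where
  lift : ∀ n, range (d n) →ₗ[R] L (n + 1)
  d_lift : ∀ n y, d n (lift n y) = y
  homology : ∀ n, Submodule R (L n)
  disjoint : ∀ n, Disjoint (range (d n)) (homology n)
  sup_eq : ∀ n, range (d n) ⊔ homology n = cycles d n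

theorem projective_range_of_projective_homology [∀ i, Module.Projective R (L i)]
    (hdd : ∀ i, d i ∘ₗ d (i + 1) = 0)
    (h0 : Module.Projective R (L 0 ⧸ range (d 0)))
    (hH : ∀ i, Module.Projective R (ker (d i) ⧸ (range (d (i + 1))).comap (ker (d i)).subtype)) :
    ∀ n, Module.Projective R (range (d n))
  | 0 => projective_of_projective_quotient _
  | n + 1 =>
    have := projective_range_of_projective_homology hdd h0 hH n
    have := (d n).projective_ker
    have := hH n
    have := projective_of_projective_quotient ((range (d (n + 1))).comap (ker (d n)).subtype)
    .of_equiv (comapSubtypeEquivOfLe (range_le_ker_iff.2 (hdd n)))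

namespace BoundarySplitting

variable {d}

theorem nonempty_of_projective_homology [∀ i, Module.Projective R (L i)]
    (hdd : ∀ i, d i ∘ₗ d (i + 1) = 0)
    (h0 : Module.Projective R (L 0 ⧸ range (d 0)))
    (hH : ∀ i, Module.Projective R (ker (d i) ⧸ (range (d (i + 1))).comap (ker (d i)).subtype)) :
    Nonempty (BoundarySplitting d) := by
  choose lift hlift using fun n =>
    have := projective_range_of_projective_homology d hdd h0 hH n
    (d n).rangeRestrict.exists_rightInverse_of_surjective (range_rangeRestrict _)
  have hcompl : ∀ n, ∃ h, Disjoint (range (d n)) h ∧ range (d n) ⊔ h = cycles d n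
    | 0 =>
      have ⟨h, hh⟩ := (range (d 0)).exists_isCompl_of_projective_quotient
      ⟨h, hh.disjoint, hh.sup_eq_top⟩
    | n + 1 =>
      have := hH n
      exists_disjoint_sup_eq_of_projective_quotient (z := ker (d n)) (range_le_ker_iff.2 (hdd n))
  choose H hdisj hsup using hcompl
  exact ⟨⟨lift, fun n y => congr(($(hlift n) y : L n)), H, hdisj, hsup⟩⟩

variable (S : BoundarySplitting d)

def complement : ∀ n, Submodule R (L n)
  | 0 => ⊥
  | n + 1 => range (S.lift n)

theorem isCompl_cycles_complement : ∀ n, IsCompl (cycles d n) (S.complement n)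
  | 0 => isCompl_top_bot
  | n + 1 => by
    rw [cycles, complement, ← ker_rangeRestrict]
    exact (isCompl_range_ker_of_comp_eq_id (LinearMap.ext fun y => Subtype.ext (S.d_lift n y))).symm

def exactPart (n : ℕ) : Submodule R (L n) := range (d n) ⊔ S.complement n

theorem isCompl_exactPart_homology (n : ℕ) : IsCompl (S.exactPart n) (S.homology n) := by
  refine ((S.disjoint n).symm.isCompl_sup_right_of_isCompl_sup_left ?_).symm
  rw [sup_comm, S.sup_eq]
  exact S.isCompl_cycles_complement n

theorem isCompl_range_homology_sup_complement (n : ℕ) :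
    IsCompl (range (d n)) (S.homology n ⊔ S.complement n) := by
  refine (S.disjoint n).isCompl_sup_right_of_isCompl_sup_left ?_
  rw [S.sup_eq]
  exact S.isCompl_cycles_complement n

theorem homology_le_cycles (n : ℕ) : S.homology n ≤ cycles d n := le_sup_right.trans (S.sup_eq n).le

noncomputable def homotopy (n : ℕ) : L n →ₗ[R] L (n + 1) :=
  S.lift n ∘ₗ (range (d n)).projectionOnto _ (S.isCompl_range_homology_sup_complement n)

theorem d_homotopy {n : ℕ} {x : L n} (hx : x ∈ range (d n)) : d n (S.homotopy n x) = x := by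
  simp [homotopy, projectionOnto_apply_of_mem_left _ hx, S.d_lift]

theorem homotopy_of_mem_complement {n : ℕ} {x : L n} (hx : x ∈ S.complement n) :
    S.homotopy n x = 0 := by
  simp [homotopy, projectionOnto_apply_of_mem_right _ (mem_sup_right hx)]

theorem homotopy_d_of_mem_complement {n : ℕ} {x : L (n + 1)} (hx : x ∈ S.complement (n + 1)) :
    S.homotopy n (d n x) = x := by
  obtain ⟨y, rfl⟩ := hx
  simp [homotopy, S.d_lift]

theorem d_homotopy_add_homotopy_d {n : ℕ} {x : L (n + 1)} (hx : x ∈ S.exactPart (n + 1)) :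
    d (n + 1) (S.homotopy (n + 1) x) + S.homotopy n (d n x) = x := by
  obtain ⟨b, hb, c, hc, rfl⟩ := mem_sup.1 hx
  have hdb : d n b = 0 := (le_sup_left.trans (S.sup_eq (n + 1)).le) hb
  simp [S.d_homotopy hb, hdb, S.homotopy_of_mem_complement hc, S.homotopy_d_of_mem_complement hc]

end BoundarySplitting

end ChainComplex

theorem stmt_6 {R : Type*} [CommRing R] (L : ℕ → Type*)
    [∀ i, AddCommGroup (L i)] [∀ i, Module R (L i)] [∀ i, Module.Projective R (L i)]
    (d : ∀ i : ℕ, L (i + 1) →ₗ[R] L i)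
    (hdd : ∀ i, d i ∘ₗ d (i + 1) = 0) :
    (∃ A B : ∀ i, Submodule R (L i),
      (∀ i, IsCompl (A i) (B i)) ∧
      (∀ i, ∀ x ∈ A (i + 1), d i x ∈ A i) ∧
      (∀ i, ∀ x ∈ B (i + 1), d i x = 0) ∧
      ∃ s : ∀ i, L i →ₗ[R] L (i + 1),
        (∀ i, ∀ x ∈ A i, s i x ∈ A (i + 1)) ∧
        (∀ x ∈ A 0, d 0 (s 0 x) = x) ∧
        (∀ i, ∀ x ∈ A (i + 1), d (i + 1) (s (i + 1) x) + s i (d i x) = x)) ↔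
    (Module.Projective R (L 0 ⧸ LinearMap.range (d 0)) ∧
      ∀ i, Module.Projective R
        (↥(LinearMap.ker (d i)) ⧸
          Submodule.comap (LinearMap.ker (d i)).subtype (LinearMap.range (d (i + 1))))) := by
  constructor
  · rintro ⟨A, B, hAB, hdA, hdB, s, -, hs0, hs⟩
    have hrange (i : ℕ) : range (d i) ≤ A i := range_le_of_isCompl (hAB (i + 1)) (hdA i) (hdB i)
    have := projective_of_isCompl (hAB 0).symm
    refine ⟨?_, fun i => ?_⟩
    · rw [le_antisymm (hrange 0) fun x hx => ⟨s 0 x, hs0 x hx⟩]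
      exact projective_quotient_of_isCompl (hAB 0)
    · refine projective_quotient_comap_of_isCompl (hAB (i + 1)) (hdB i) (hrange (i + 1)) ?_
      rintro x ⟨hxZ, hxA⟩
      refine ⟨s (i + 1) x, ?_⟩
      simpa [mem_ker.1 hxZ] using hs i x hxA
  · rintro ⟨h0, hH⟩
    obtain ⟨S⟩ := BoundarySplitting.nonempty_of_projective_homology hdd h0 hH
    refine ⟨S.exactPart, S.homology, S.isCompl_exactPart_homology,
      fun i x _ => mem_sup_left (mem_range_self _ x), fun i x hx => S.homology_le_cycles (i + 1) hx,
      S.homotopy, fun i x _ => mem_sup_right (mem_range_self _ _), fun x hx => ?_,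
      fun i x hx => S.d_homotopy_add_homotopy_d hx⟩
    exact S.d_homotopy (by simpa [BoundarySplitting.exactPart, BoundarySplitting.complement] using hx)
end

section
/- Let G be a free module of rank g over a commutative ring. For every integer i ≥ 1, the complex ⋯ → D_2 G* ⊗ ⋀^{i-2} G* → D_1 G* ⊗ ⋀^{i-1} G* → D_0 G* ⊗ ⋀^i G* → 0 (with differentials induced by comultiplication on divided powers followed by exterior multiplication) is split exact; in particular, the exterior multiplication map μ : G* ⊗ ⋀^{i-1} G* → ⋀^i G* is a split surjection whose kernel equals the image of D_2 G* ⊗ ⋀^{i-2} G* → G* ⊗ ⋀^{i-1} G*. -/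
/-!
On the basis vectors `γ^(k) ⊗ e_s` the differential moves an index `j ∈ s` into `k`, with the
sign `(-1)^#{t ∈ s | t < j}`. The least index `m` occurring in `k` or in `s` is unchanged by
these moves, and the contracting homotopy moves `m` back from `k` into `s` when `m ∉ s` and
kills `γ^(k) ⊗ e_s` otherwise. Then `d h + h d` is the identity on every basis vector except
`γ^(0) ⊗ e_∅`, which only occurs for `i = 0`. The differential squares to zero because the two
orders of moving a pair `j ≠ j'` carry opposite signs.
-/

/- The complex `⋯ → D_2 G* ⊗ ⋀^{i-2} G* → D_1 G* ⊗ ⋀^{i-1} G* → D_0 G* ⊗ ⋀^i G* → 0`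
for a free module `G` of rank `g`, in coordinates: `G*` has basis `Fin g`, `D_c G*` has basis
the exponent vectors `k : Fin g → ℕ` of degree `c`, and `⋀^d G*` has basis the subsets
`s : Finset (Fin g)` of cardinality `d`.  The module `DW R g i c` is `D_c G* ⊗ ⋀^{i-c} G*`
(it is zero when `c > i`), and the differential `γ^(c) ⊗ z ↦ γ^(c-1) ⊗ (γ ∧ z)` becomes the
combinatorial map `dDW` below; `dDW R g i 0` is the exterior multiplication
`μ : D_1 G* ⊗ ⋀^{i-1} G* → ⋀^i G*`. -/

noncomputable section

/-- Coordinate model of `D_c G* ⊗ ⋀^{i-c} G*`. -/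
abbrev DW (R : Type*) [CommRing R] (g i c : ℕ) : Type _ :=
  {p : (Fin g → ℕ) × Finset (Fin g) // (∑ j, p.1 j) = c ∧ p.2.card + c = i} → R

/-- The differential `D_{c+1} G* ⊗ ⋀^{i-c-1} G* → D_c G* ⊗ ⋀^{i-c} G*`, sending
`γ^(c+1) ⊗ z` to `γ^(c) ⊗ (γ ∧ z)` (extended via comultiplication on divided powers). -/
def dDW (R : Type*) [CommRing R] (g i c : ℕ) : DW R g i (c + 1) →ₗ[R] DW R g i c where
  toFun F := fun p => ∑ j ∈ p.1.2.attach,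
    ((-1 : R) ^ ((p.1.2.filter (fun t => t < j.1)).card)) *
      F ⟨(p.1.1 + Pi.single j.1 1, p.1.2.erase j.1), by
        obtain ⟨h1, h2⟩ := p.2
        refine ⟨?_, ?_⟩
        · simp [Finset.sum_add_distrib, h1, Finset.sum_pi_single']
        · have hc : 1 ≤ p.1.2.card := Finset.card_pos.mpr ⟨j.1, j.2⟩
          rw [Finset.card_erase_of_mem j.2]
          omega⟩
  map_add' F G := by
    funext p
    simp [mul_add, Finset.sum_add_distrib]
  map_smul' r F := by
    funext p
    simp only [Pi.smul_apply, smul_eq_mul, RingHom.id_apply]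
    rw [Finset.mul_sum]
    exact Finset.sum_congr rfl fun j _ => by ring

theorem Pi.single_one_le_of_ne_zero {ι : Type*} [DecidableEq ι] {k : ι → ℕ} {m : ι}
    (hkm : k m ≠ 0) : Pi.single m 1 ≤ k := by
  intro t
  by_cases h : t = m
  · subst h; simpa [Nat.one_le_iff_ne_zero] using hkm
  · simp [h]

open Finset

theorem Finset.sum_sum_erase_eq_zero_of_antisymm {α M : Type*} [DecidableEq α] [AddCommGroup M]
    (s : Finset α) (f : α → α → M) (hf : ∀ a ∈ s, ∀ b ∈ s, a ≠ b → f a b = -f b a) :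
    ∑ a ∈ s, ∑ b ∈ s.erase a, f a b = 0 := by
  rw [← sum_finset_product' s.offDiag _ _ fun p => by simp [and_comm, ne_comm]]
  refine sum_involution (fun p _ => p.swap) (fun p hp => ?_) (fun p hp _ => ?_)
    (fun p hp => by simp only [mem_offDiag] at hp ⊢; tauto) (fun p _ => p.swap_swap)
  · obtain ⟨ha, hb, hab⟩ := mem_offDiag.1 hp
    simp [hf _ ha _ hb hab]
  · exact fun h => (mem_offDiag.1 hp).2.2 (congrArg Prod.fst h).symm

namespace DividedKoszul

variable {R : Type*} [CommRing R] {ι : Type*} [LinearOrder ι]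

variable (R) in
def koszulSign (s : Finset ι) (j : ι) : R := (-1) ^ #{t ∈ s | t < j}

theorem koszulSign_of_forall_le {s : Finset ι} {j : ι} (h : ∀ t ∈ s, j ≤ t) :
    koszulSign R s j = 1 := by
  rw [koszulSign, filter_false_of_mem fun t ht => not_lt.2 (h t ht), card_empty, pow_zero]

theorem koszulSign_insert_of_lt {s : Finset ι} {m j : ι} (hm : m ∉ s) (h : m < j) :
    koszulSign R (insert m s) j = -koszulSign R s j := by
  rw [koszulSign, filter_insert, if_pos h, card_insert_of_notMem fun h' => hm (mem_filter.1 h').1,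
    pow_succ, mul_neg_one, koszulSign]

theorem koszulSign_erase_of_lt {s : Finset ι} {j j' : ι} (hj : j ∈ s) (h : j < j') :
    koszulSign R (s.erase j) j' = -koszulSign R s j' := by
  conv_rhs => rw [← insert_erase hj, koszulSign_insert_of_lt (notMem_erase j s) h, neg_neg]

theorem koszulSign_erase_of_le {s : Finset ι} {j j' : ι} (h : j' ≤ j) :
    koszulSign R (s.erase j) j' = koszulSign R s j' := by
  rw [koszulSign, filter_erase, erase_eq_of_notMem fun h' => (mem_filter.1 h').2.not_ge h,
    koszulSign]

theorem koszulSign_mul_koszulSign_erase {s : Finset ι} {j j' : ι} (hj : j ∈ s) (hj' : j' ∈ s)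
    (hne : j ≠ j') :
    koszulSign R s j * koszulSign R (s.erase j) j' =
      -(koszulSign R s j' * koszulSign R (s.erase j') j) := by
  rcases hne.lt_or_gt with h | h
  · rw [koszulSign_erase_of_lt hj h, koszulSign_erase_of_le h.le]; ring
  · rw [koszulSign_erase_of_le h.le, koszulSign_erase_of_lt hj' h]; ring

variable (R ι) in
def koszulDiff : ((ι → ℕ) × Finset ι → R) →ₗ[R] ((ι → ℕ) × Finset ι → R) :=
  LinearMap.pi fun p => ∑ j ∈ p.2,
    koszulSign R p.2 j •
      LinearMap.proj (R := R) (φ := fun _ => R) (p.1 + Pi.single j 1, p.2.erase j)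

theorem koszulDiff_apply (G : (ι → ℕ) × Finset ι → R) (k : ι → ℕ) (s : Finset ι) :
    koszulDiff R ι G (k, s) = ∑ j ∈ s, koszulSign R s j * G (k + Pi.single j 1, s.erase j) := by
  simp [koszulDiff]

theorem koszulDiff_koszulDiff (G : (ι → ℕ) × Finset ι → R) :
    koszulDiff R ι (koszulDiff R ι G) = 0 := by
  ext ⟨k, s⟩
  simp_rw [koszulDiff_apply, Finset.mul_sum, ← mul_assoc]
  refine sum_sum_erase_eq_zero_of_antisymm s _ fun j hj j' hj' hne => ?_
  rw [koszulSign_mul_koszulSign_erase hj hj' hne, add_right_comm, erase_right_comm, neg_mul]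

variable [Fintype ι]

def pivotSet (p : (ι → ℕ) × Finset ι) : Finset ι := ({j | p.1 j ≠ 0} : Finset ι) ∪ p.2

theorem mem_pivotSet {k : ι → ℕ} {s : Finset ι} {j : ι} :
    j ∈ pivotSet (k, s) ↔ k j ≠ 0 ∨ j ∈ s := by
  simp [pivotSet]

theorem pivotSet_add_single_erase {k : ι → ℕ} {s : Finset ι} {j : ι} (hj : j ∈ s) :
    pivotSet (k + Pi.single j 1, s.erase j) = pivotSet (k, s) := by
  ext t
  by_cases h : t = j
  · subst h; simp [pivotSet, hj]
  · simp [pivotSet, h]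

variable (R ι) in
def koszulHomotopy : ((ι → ℕ) × Finset ι → R) →ₗ[R] ((ι → ℕ) × Finset ι → R) :=
  LinearMap.pi fun p =>
    if h : (pivotSet p).Nonempty then
      if (pivotSet p).min' h ∈ p.2 then 0
      else LinearMap.proj (R := R) (φ := fun _ => R)
        (p.1 - Pi.single ((pivotSet p).min' h) 1, insert ((pivotSet p).min' h) p.2)
    else 0

theorem koszulHomotopy_apply (G : (ι → ℕ) × Finset ι → R) (p : (ι → ℕ) × Finset ι) :
    koszulHomotopy R ι G p =
      if h : (pivotSet p).Nonempty then
        if (pivotSet p).min' h ∈ p.2 then 0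
        else G (p.1 - Pi.single ((pivotSet p).min' h) 1, insert ((pivotSet p).min' h) p.2)
      else 0 := by
  simp only [koszulHomotopy, LinearMap.pi_apply]
  split_ifs <;> rfl

theorem koszulHomotopy_apply_of_mem (G : (ι → ℕ) × Finset ι → R) {k : ι → ℕ} {s : Finset ι}
    {m : ι} (hm : IsLeast ↑(pivotSet (k, s)) m) (hms : m ∈ s) :
    koszulHomotopy R ι G (k, s) = 0 := by
  have hne : (pivotSet (k, s)).Nonempty := ⟨m, hm.1⟩
  rw [koszulHomotopy_apply, dif_pos hne, (isLeast_min' _ hne).unique hm, if_pos hms]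

theorem koszulHomotopy_apply_of_notMem (G : (ι → ℕ) × Finset ι → R) {k : ι → ℕ} {s : Finset ι}
    {m : ι} (hm : IsLeast ↑(pivotSet (k, s)) m) (hms : m ∉ s) :
    koszulHomotopy R ι G (k, s) = G (k - Pi.single m 1, insert m s) := by
  have hne : (pivotSet (k, s)).Nonempty := ⟨m, hm.1⟩
  rw [koszulHomotopy_apply, dif_pos hne, (isLeast_min' _ hne).unique hm, if_neg hms]

theorem koszulDiff_koszulHomotopy_of_mem (G : (ι → ℕ) × Finset ι → R) {k : ι → ℕ}
    {s : Finset ι} {m : ι} (hm : IsLeast ↑(pivotSet (k, s)) m) (hms : m ∈ s) :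
    koszulDiff R ι (koszulHomotopy R ι G) (k, s) = G (k, s) := by
  have hmove : ∀ j ∈ s, IsLeast ↑(pivotSet (k + Pi.single j 1, s.erase j)) m := fun j hj => by
    rwa [pivotSet_add_single_erase hj]
  rw [koszulDiff_apply, sum_eq_single_of_mem m hms fun j hj hjm => ?_]
  · rw [koszulSign_of_forall_le fun t ht => hm.2 (mem_pivotSet.2 (Or.inr ht)), one_mul,
      koszulHomotopy_apply_of_notMem G (hmove m hms) (notMem_erase m s), add_tsub_cancel_right,
      insert_erase hms]
  · rw [koszulHomotopy_apply_of_mem G (hmove j hj) (mem_erase.2 ⟨Ne.symm hjm, hms⟩), mul_zero]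

theorem koszulDiff_koszulHomotopy_add_of_notMem (G : (ι → ℕ) × Finset ι → R) {k : ι → ℕ}
    {s : Finset ι} {m : ι} (hm : IsLeast ↑(pivotSet (k, s)) m) (hms : m ∉ s) :
    koszulDiff R ι (koszulHomotopy R ι G) (k, s) + koszulHomotopy R ι (koszulDiff R ι G) (k, s) =
      G (k, s) := by
  have hkm : Pi.single m 1 ≤ k :=
    Pi.single_one_le_of_ne_zero ((mem_pivotSet.1 hm.1).resolve_right hms)
  have hlt : ∀ j ∈ s, m < j := fun j hj =>
    (hm.2 (mem_pivotSet.2 (Or.inr hj))).lt_of_ne fun h => hms (h ▸ hj)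
  have hmin : ∀ t ∈ insert m s, m ≤ t := by
    simpa using fun t ht => (hlt t ht).le
  rw [koszulHomotopy_apply_of_notMem _ hm hms, koszulDiff_apply, koszulDiff_apply, sum_insert hms,
    koszulSign_of_forall_le hmin, one_mul, tsub_add_cancel_of_le hkm, erase_insert hms,
    add_left_comm, ← sum_add_distrib, sum_eq_zero, add_zero]
  intro j hj
  have hmove : IsLeast ↑(pivotSet (k + Pi.single j 1, s.erase j)) m := by
    rwa [pivotSet_add_single_erase hj]
  rw [koszulHomotopy_apply_of_notMem G hmove fun h => hms (mem_of_mem_erase h),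
    koszulSign_insert_of_lt hms (hlt j hj), erase_insert_of_ne (hlt j hj).ne,
    tsub_add_eq_add_tsub hkm]
  ring

theorem koszulDiff_koszulHomotopy_add (G : (ι → ℕ) × Finset ι → R) {k : ι → ℕ} {s : Finset ι}
    (hne : (pivotSet (k, s)).Nonempty) :
    koszulDiff R ι (koszulHomotopy R ι G) (k, s) + koszulHomotopy R ι (koszulDiff R ι G) (k, s) =
      G (k, s) := by
  have hm := isLeast_min' _ hne
  by_cases hms : (pivotSet (k, s)).min' hne ∈ s
  · rw [koszulDiff_koszulHomotopy_of_mem G hm hms, koszulHomotopy_apply_of_mem _ hm hms, add_zero]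
  · exact koszulDiff_koszulHomotopy_add_of_notMem G hm hms

theorem degree_add_single_erase_iff {k : ι → ℕ} {s : Finset ι} {j : ι} (hj : j ∈ s) {c i : ℕ} :
    ((∑ t, (k + Pi.single j 1 : ι → ℕ) t) = c + 1 ∧ (s.erase j).card + (c + 1) = i) ↔
      ((∑ t, k t) = c ∧ s.card + c = i) := by
  have := card_pos.2 ⟨j, hj⟩
  simp only [Pi.add_apply, sum_add_distrib, sum_pi_single', mem_univ, ↓reduceIte,
    Nat.add_right_cancel_iff, card_erase_of_mem hj, and_congr_right_iff]
  omega

theorem degree_tsub_single_insert_iff {k : ι → ℕ} {s : Finset ι} {m : ι}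
    (hkm : Pi.single m 1 ≤ k) (hms : m ∉ s) {c i : ℕ} :
    ((∑ t, (k - Pi.single m 1 : ι → ℕ) t) = c ∧ (insert m s).card + c = i) ↔
      ((∑ t, k t) = c + 1 ∧ s.card + (c + 1) = i) := by
  have h := degree_add_single_erase_iff (k := k - Pi.single m 1) (mem_insert_self m s) (c := c)
    (i := i)
  rwa [tsub_add_cancel_of_le hkm, erase_insert hms, Iff.comm] at h

end DividedKoszul

/- `DW R g i c` is the part of `(Fin g → ℕ) × Finset (Fin g) → R` supported in bidegree
`(c, i - c)`; `dDW` and the homotopy `hDW` are restrictions of the ungraded maps above. -/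
namespace DW

open DividedKoszul

variable {R : Type*} [CommRing R] {g i c : ℕ}

variable (R g i c) in
def extend : DW R g i c →ₗ[R] ((Fin g → ℕ) × Finset (Fin g) → R) :=
  Function.ExtendByZero.linearMap R Subtype.val

variable (R g i c) in
def restrict : ((Fin g → ℕ) × Finset (Fin g) → R) →ₗ[R] DW R g i c :=
  LinearMap.funLeft R R Subtype.val

theorem extend_apply (F : DW R g i c) {q : (Fin g → ℕ) × Finset (Fin g)}
    (hq : (∑ j, q.1 j) = c ∧ q.2.card + c = i) : extend R g i c F q = F ⟨q, hq⟩ :=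
  Subtype.val_injective.extend_apply _ _ ⟨q, hq⟩

theorem extend_apply_of_not (F : DW R g i c) {q : (Fin g → ℕ) × Finset (Fin g)}
    (hq : ¬((∑ j, q.1 j) = c ∧ q.2.card + c = i)) : extend R g i c F q = 0 :=
  Function.extend_apply' _ _ _ fun ⟨p, hp⟩ => hq (hp ▸ p.2)

theorem dDW_apply (F : DW R g i (c + 1))
    (p : {p : (Fin g → ℕ) × Finset (Fin g) // (∑ j, p.1 j) = c ∧ p.2.card + c = i}) :
    dDW R g i c F p = koszulDiff R (Fin g) (extend R g i (c + 1) F) p.1 := by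
  rw [koszulDiff_apply, ← sum_attach]
  refine sum_congr rfl fun j _ => ?_
  rw [extend_apply _ ((degree_add_single_erase_iff j.2).2 p.2)]
  rfl

theorem extend_dDW (F : DW R g i (c + 1)) :
    extend R g i c (dDW R g i c F) = koszulDiff R (Fin g) (extend R g i (c + 1) F) := by
  funext ⟨k, s⟩
  by_cases hq : (∑ j, k j) = c ∧ s.card + c = i
  · exact (extend_apply _ hq).trans (dDW_apply F ⟨(k, s), hq⟩)
  · rw [extend_apply_of_not _ hq, koszulDiff_apply]
    refine (sum_eq_zero fun j hj => ?_).symm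
    rw [extend_apply_of_not _ ((degree_add_single_erase_iff hj).not.2 hq), mul_zero]

theorem dDW_dDW (y : DW R g i (c + 1 + 1)) : dDW R g i c (dDW R g i (c + 1) y) = 0 := by
  funext p
  rw [dDW_apply, extend_dDW, koszulDiff_koszulDiff]
  rfl

variable (R g i c) in
def hDW : DW R g i c →ₗ[R] DW R g i (c + 1) :=
  restrict R g i (c + 1) ∘ₗ koszulHomotopy R (Fin g) ∘ₗ extend R g i c

theorem hDW_apply (F : DW R g i c)
    (p : {p : (Fin g → ℕ) × Finset (Fin g) // (∑ j, p.1 j) = c + 1 ∧ p.2.card + (c + 1) = i}) :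
    hDW R g i c F p = koszulHomotopy R (Fin g) (extend R g i c F) p.1 :=
  rfl

theorem extend_hDW (F : DW R g i c) :
    extend R g i (c + 1) (hDW R g i c F) = koszulHomotopy R (Fin g) (extend R g i c F) := by
  funext ⟨k, s⟩
  by_cases hq : (∑ j, k j) = c + 1 ∧ s.card + (c + 1) = i
  · exact extend_apply _ hq
  rw [extend_apply_of_not _ hq, koszulHomotopy_apply]
  split_ifs with hne hms
  · rfl
  · have hkm := (mem_pivotSet.1 (min'_mem _ hne)).resolve_right hms
    exact (extend_apply_of_not _
      ((degree_tsub_single_insert_iff (Pi.single_one_le_of_ne_zero hkm) hms).not.2 hq)).symm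
  · rfl

theorem dDW_hDW_zero (hi : 1 ≤ i) (x : DW R g i 0) : dDW R g i 0 (hDW R g i 0 x) = x := by
  funext ⟨⟨k, s⟩, hk, hs⟩
  dsimp only at hk hs
  obtain ⟨j, hj⟩ := card_pos.1 (show 0 < s.card by omega)
  have hne : (pivotSet (k, s)).Nonempty := ⟨j, mem_pivotSet.2 (Or.inr hj)⟩
  have hm := isLeast_min' _ hne
  have hms : (pivotSet (k, s)).min' hne ∈ s :=
    (mem_pivotSet.1 hm.1).resolve_left fun h => h (sum_eq_zero_iff.1 hk _ (mem_univ _))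
  rw [dDW_apply, extend_hDW, koszulDiff_koszulHomotopy_of_mem _ hm hms, extend_apply]

theorem dDW_hDW_add_hDW_dDW (x : DW R g i (c + 1)) :
    dDW R g i (c + 1) (hDW R g i (c + 1) x) + hDW R g i c (dDW R g i c x) = x := by
  funext ⟨⟨k, s⟩, hk, hs⟩
  obtain ⟨j, hj⟩ : ∃ j, k j ≠ 0 := by
    by_contra! h
    simp [h] at hk
  rw [Pi.add_apply, dDW_apply, extend_hDW, hDW_apply, extend_dDW,
    koszulDiff_koszulHomotopy_add _ ⟨j, mem_pivotSet.2 (Or.inl hj)⟩, extend_apply]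

end DW

theorem stmt_7 (R : Type*) [CommRing R] (g i : ℕ) (hi : 1 ≤ i) :
    (∃ s : ∀ c : ℕ, DW R g i c →ₗ[R] DW R g i (c + 1),
      (∀ x : DW R g i 0, dDW R g i 0 (s 0 x) = x) ∧
      (∀ (c : ℕ) (x : DW R g i (c + 1)),
        dDW R g i (c + 1) (s (c + 1) x) + s c (dDW R g i c x) = x)) ∧
    Function.Surjective (dDW R g i 0) ∧
    LinearMap.ker (dDW R g i 0) = LinearMap.range (dDW R g i 1) := by
  refine ⟨⟨DW.hDW R g i, DW.dDW_hDW_zero hi, fun c => DW.dDW_hDW_add_hDW_dDW⟩,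
    fun y => ⟨DW.hDW R g i 0 y, DW.dDW_hDW_zero hi y⟩, ?_⟩
  ext x
  constructor
  · intro hx
    refine ⟨DW.hDW R g i 1 x, ?_⟩
    simpa [LinearMap.mem_ker.1 hx] using DW.dDW_hDW_add_hDW_dDW (c := 0) x
  · rintro ⟨y, rfl⟩
    exact DW.dDW_dDW y

end
end

section
/- Let R be a commutative ring, E, G free modules, and Y : E → G a module map. For every ε_k ∈ ⋀^k E and γ ∈ G*, the contraction of ε_k ⋈ γ^(k) ∈ ⋀^k(E⊗G*) by Y^∨ ∈ (E⊗G*)* satisfies Y^∨(ε_k ⋈ γ^(k)) = ([Y*(γ)](ε_k)) ⋈ γ^(k-1), where the left contraction is the Koszul differential on ⋀^•(E⊗G*) induced by Y^∨, and [Y*(γ)](ε_k) ∈ ⋀^{k-1} E is the contraction of ε_k by Y*(γ) ∈ E*. -/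
open scoped TensorProduct

/- The key observation in the proof that `(𝔽, d)` is a complex: for a map `Y : E → G`,
a dual vector `γ ∈ G*` and `ε_k ∈ ⋀^k E`, one has
`Y^∨(ε_k ⋈ γ^(k)) = ([Y*(γ)](ε_k)) ⋈ γ^(k-1)`.
Here, for a fixed `γ`, the map `⋀^m E → ⋀^m (E ⊗ G*)`, `z ↦ z ⋈ γ^(m)`, is the map induced on
exterior algebras by `e ↦ e ⊗ γ` (on decomposables, `(e_1 ∧ ⋯ ∧ e_m) ⋈ γ^(m) =
(e_1 ⊗ γ) ∧ ⋯ ∧ (e_m ⊗ γ)`); `Y^∨ ∈ (E ⊗ G*)*` is the adjoint `Y^∨(ε ⊗ γ') = γ'(Y ε)`,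
acting as the Koszul differential (left contraction) on `⋀^•(E ⊗ G*)`; and `[Y*(γ)](ε_k)` is
the contraction of `ε_k` by `Y*(γ) ∈ E*`. -/

theorem stmt_9 {R E G : Type*} [CommRing R]
    [AddCommGroup E] [Module R E] [Module.Free R E]
    [AddCommGroup G] [Module R G] [Module.Free R G]
    (Y : E →ₗ[R] G) (γ : Module.Dual R G) (k : ℕ)
    (x : ExteriorAlgebra R E) (hx : x ∈ ⋀[R]^k E) :
    CliffordAlgebra.contractLeft (Q := (0 : QuadraticForm R (E ⊗[R] Module.Dual R G)))
        (TensorProduct.lift ((Module.Dual.eval R G) ∘ₗ Y))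
        (ExteriorAlgebra.map (M := E) (N := E ⊗[R] Module.Dual R G)
          ((TensorProduct.mk R E (Module.Dual R G)).flip γ) x) =
      ExteriorAlgebra.map (M := E) (N := E ⊗[R] Module.Dual R G)
        ((TensorProduct.mk R E (Module.Dual R G)).flip γ)
        (CliffordAlgebra.contractLeft (Q := (0 : QuadraticForm R E)) (Y.dualMap γ) x) := by
  clear hx
  induction x using CliffordAlgebra.left_induction with
  | algebraMap r => simp
  | add x y hx hy => simp [map_add, hx, hy]
  | ι_mul m x hx =>
      rw [map_mul, ExteriorAlgebra.map_apply_ι]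
      show CliffordAlgebra.contractLeft _ (ExteriorAlgebra.ι R _ * _) = _
      rw [CliffordAlgebra.contractLeft_ι_mul, CliffordAlgebra.contractLeft_ι_mul,
        map_sub, map_smul, map_mul, ExteriorAlgebra.map_apply_ι, hx]
      congr 1
end
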